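/- Let n ≥ 2 be even and δ ∈ [0, 1/2). Let λ consist of a perfect matching of [n] into n/2 unordered pairs together with an orientation bit b_ℓ ∈ {0,1} for each pair; for x ∈ {0,1}^n let c(λ, x) denote the number of pairs (i,j) of λ with bit b such that (−1)^{x_i + x_j} = (−1)^b. Define P_λ on {0,1}^n by P_λ(x) = 2^{−n}·(1+2δ)^{c(λ,x)}·(1−2δ)^{n/2 − c(λ,x)}. Then ∑_{x∈{0,1}^n} |P_λ(x) − 2^{−n}| = ∑_{k=0}^{n/2} C(n/2, k)·|(1/2+δ)^k·(1/2−δ)^{n/2−k} − 2^{−n/2}|; that is, the L1 distance between P_λ and the uniform distribution on {0,1}^n equals the L1 distance between the Binomial(n/2, 1/2+δ) and Binomial(n/2, 1/2) distributions. -/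
import Mathlib


/-- The agreement count `c(λ, x)`: the number of pairs `{i, f i}` of the matching
(encoded as a fixed-point-free involution `f`, with orientation bit `b i` constant on
pairs) on which `(−1)^{x_i + x_{f i}} = (−1)^{b i}`, i.e. `x i = x (f i)` iff
`b i = false`. Each pair is counted once (the underlying set of points is halved). -/
def agreeCount {n : ℕ} (f : Fin n → Fin n) (b : Fin n → Bool) (x : Fin n → Bool) : ℕ :=
  (Finset.univ.filter (fun i : Fin n => ((x i = x (f i)) ↔ b i = false))).card / 2

/-- The distribution `P_λ` on `{0,1}^n` associated with the matching-orientation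
parameter `λ = (f, b)` and correlation parameter `δ`. -/
noncomputable def Plam (n : ℕ) (δ : ℝ) (f : Fin n → Fin n) (b : Fin n → Bool) :
    (Fin n → Bool) → ℝ :=
  fun x => (2:ℝ)⁻¹ ^ n * (1 + 2 * δ) ^ agreeCount f b x
    * (1 - 2 * δ) ^ (n / 2 - agreeCount f b x)

section aux
variable {n : ℕ} (f : Fin n → Fin n) (b : Fin n → Bool)

lemma flt (hinv : ∀ i, f (f i) = i) (hfpf : ∀ i, f i ≠ i) {j : Fin n} (h : ¬ j < f j) :
    f j < f (f j) := by
  rw [hinv]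
  rcases lt_or_gt_of_ne (hfpf j) with h' | h'
  · exact h'
  · exact absurd h' h

def matchEquiv (hinv : ∀ i, f (f i) = i) (hfpf : ∀ i, f i ≠ i) :
    (Fin n → Bool) ≃
      (({i : Fin n // i < f i} → Bool) × ({i : Fin n // i < f i} → Bool)) where
  toFun x := (fun i => x i, fun i => decide ((x i = x (f i)) ↔ b i = false))
  invFun yp := fun j =>
    if h : j < f j then yp.1 ⟨j, h⟩
    else xor (yp.1 ⟨f j, flt f hinv hfpf h⟩) (xor (b (f j)) (!(yp.2 ⟨f j, flt f hinv hfpf h⟩)))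
  left_inv x := by
    funext j
    by_cases h : j < f j
    · simp [h]
    · simp only [h, dif_neg, not_false_iff]
      have hff := hinv j
      rw [hff]
      generalize x (f j) = a
      generalize x j = c
      generalize b (f j) = d
      revert a c d; decide
  right_inv yp := by
    obtain ⟨y, p⟩ := yp
    have hlt : ∀ i : {i : Fin n // i < f i}, ¬ (f i.1 < f (f i.1)) := by
      intro i
      rw [hinv]
      exact not_lt.2 (le_of_lt i.2)
    have hsub : ∀ (i : {i : Fin n // i < f i}) (hpf : f (f i.1) < f (f (f i.1))),
        (⟨f (f i.1), hpf⟩ : {i : Fin n // i < f i}) = i := by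
      intro i hpf
      exact Subtype.ext (hinv i.1)
    refine Prod.ext (funext fun i => ?_) (funext fun i => ?_)
    · simp [i.2]
    · simp only
      simp only [dif_pos i.2, dif_neg (hlt i)]
      simp only [hsub, Subtype.coe_eta, hinv]
      generalize y i = a
      generalize b i.1 = d
      generalize p i = q
      revert a d q; decide

lemma card_filter_double (hinv : ∀ i, f (f i) = i) (hfpf : ∀ i, f i ≠ i)
    (C : Fin n → Prop) [DecidablePred C] (hC : ∀ i, C (f i) ↔ C i) :
    (Finset.univ.filter C).card
      = 2 * (Finset.univ.filter (fun i => C i ∧ i < f i)).card := by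
  classical
  have hsplit : Finset.univ.filter (fun i => C i ∧ i < f i)
      ∪ Finset.univ.filter (fun i => C i ∧ ¬ i < f i) = Finset.univ.filter C := by
    ext i
    simp only [Finset.mem_union, Finset.mem_filter, Finset.mem_univ, true_and]
    tauto
  have hdisj : Disjoint (Finset.univ.filter (fun i => C i ∧ i < f i))
      (Finset.univ.filter (fun i => C i ∧ ¬ i < f i)) := by
    rw [Finset.disjoint_filter]
    tauto
  have hcard : (Finset.univ.filter (fun i => C i ∧ ¬ i < f i)).card
      = (Finset.univ.filter (fun i => C i ∧ i < f i)).card := by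
    apply Finset.card_bij' (fun i _ => f i) (fun i _ => f i)
    · intro i hi
      simp only [Finset.mem_filter, Finset.mem_univ, true_and] at hi ⊢
      exact ⟨(hC i).2 hi.1, flt f hinv hfpf hi.2⟩
    · intro i hi
      simp only [Finset.mem_filter, Finset.mem_univ, true_and] at hi ⊢
      refine ⟨(hC i).2 hi.1, ?_⟩
      rw [hinv]
      exact not_lt.2 (le_of_lt hi.2)
    · intro i _; exact hinv i
    · intro i _; exact hinv i
  rw [← hsplit, Finset.card_union_of_disjoint hdisj, hcard]
  ring

lemma agreeCount_symm (hinv : ∀ i, f (f i) = i) (hfpf : ∀ i, f i ≠ i)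
    (hb : ∀ i, b (f i) = b i)
    (y p : {i : Fin n // i < f i} → Bool) :
    agreeCount f b ((matchEquiv f b hinv hfpf).symm (y, p))
      = (Finset.univ.filter
          (fun i : {i : Fin n // i < f i} => p i = true)).card := by
  classical
  set x := (matchEquiv f b hinv hfpf).symm (y, p) with hxdef
  have hx : (matchEquiv f b hinv hfpf) x = (y, p) := by
    rw [hxdef]; exact Equiv.apply_symm_apply _ _
  have hp : ∀ i : {i : Fin n // i < f i},
      decide ((x i.1 = x (f i.1)) ↔ b i.1 = false) = p i := by
    intro i
    have := congrArg Prod.snd hx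
    exact congrFun this i
  set C : Fin n → Prop := fun i => (x i = x (f i)) ↔ b i = false with hCdef
  have hCf : ∀ i, C (f i) ↔ C i := by
    intro i
    simp only [hCdef, hinv, hb]
    rw [eq_comm]
  have h1 : agreeCount f b x
      = (Finset.univ.filter (fun i => C i ∧ i < f i)).card := by
    rw [agreeCount, card_filter_double f hinv hfpf C hCf]
    omega
  rw [h1]
  refine Finset.card_bij' (fun i hi => (⟨i, (Finset.mem_filter.1 hi).2.2⟩ :
      {i : Fin n // i < f i})) (fun i _ => i.1) ?hi ?hj ?li ?ri
  case hi =>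
    intro i hi
    simp only [Finset.mem_filter, Finset.mem_univ, true_and] at hi ⊢
    have := hp ⟨i, hi.2⟩
    simp only [decide_eq_true_eq] at this ⊢
    rw [← this]
    exact decide_eq_true hi.1
  case hj =>
    intro i hi
    simp only [Finset.mem_filter, Finset.mem_univ, true_and] at hi ⊢
    refine ⟨?_, i.2⟩
    have := hp i
    rw [hi] at this
    exact of_decide_eq_true this
  case li => intro i _; rfl
  case ri => intro i _; rfl

end aux

theorem stmt19 (n : ℕ) (hn : 2 ≤ n) (hev : Even n) (δ : ℝ) (hδ : δ ∈ Set.Ico (0:ℝ) (1/2))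
    (f : Fin n → Fin n) (hinv : ∀ i, f (f i) = i) (hfpf : ∀ i, f i ≠ i)
    (b : Fin n → Bool) (hb : ∀ i, b (f i) = b i) :
    ∑ x : Fin n → Bool, |Plam n δ f b x - (2:ℝ)⁻¹ ^ n|
      = ∑ k ∈ Finset.range (n / 2 + 1),
          ((n / 2).choose k : ℝ) *
            |(1/2 + δ) ^ k * (1/2 - δ) ^ (n / 2 - k) - (2:ℝ)⁻¹ ^ (n / 2)| := by
  classical
  obtain ⟨t, ht⟩ := hev
  set m := n / 2 with hmdef
  have hm : n = 2 * m := by omega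
  -- cardinality of the transversal
  have hTcard : Fintype.card {i : Fin n // i < f i} = m := by
    have h2 := card_filter_double f hinv hfpf (fun _ => True) (fun _ => Iff.rfl)
    simp only [true_and, Finset.filter_true] at h2
    rw [Fintype.card_subtype]
    have hu : (Finset.univ : Finset (Fin n)).card = n := by simp
    omega
  set F : ℕ → ℝ := fun k => (2:ℝ)⁻¹ ^ n * |(1 + 2*δ) ^ k * (1 - 2*δ) ^ (m - k) - 1|
    with hFdef
  have hpoint : ∀ x, |Plam n δ f b x - (2:ℝ)⁻¹ ^ n| = F (agreeCount f b x) := by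
    intro x
    have ha : (0:ℝ) ≤ (2:ℝ)⁻¹ ^ n := by positivity
    show |(2:ℝ)⁻¹ ^ n * (1 + 2 * δ) ^ agreeCount f b x
        * (1 - 2 * δ) ^ (n / 2 - agreeCount f b x) - (2:ℝ)⁻¹ ^ n| = _
    rw [hFdef, ← hmdef]
    rw [show (2:ℝ)⁻¹ ^ n * (1 + 2 * δ) ^ agreeCount f b x
        * (1 - 2 * δ) ^ (m - agreeCount f b x) - (2:ℝ)⁻¹ ^ n
      = (2:ℝ)⁻¹ ^ n * ((1 + 2*δ) ^ agreeCount f b x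
        * (1 - 2*δ) ^ (m - agreeCount f b x) - 1) by ring]
    rw [abs_mul, abs_of_nonneg ha]
  -- key scalar identity
  have hkey : ∀ k, k ≤ m →
      (2:ℝ) ^ m * (((m.choose k : ℝ)) * F k)
        = (m.choose k : ℝ) * |(1/2 + δ) ^ k * (1/2 - δ) ^ (m - k) - (2:ℝ)⁻¹ ^ m| := by
    intro k hk
    have h2m : (2:ℝ) ^ m * (2:ℝ)⁻¹ ^ n = (2:ℝ)⁻¹ ^ m := by
      rw [hm, two_mul, pow_add, ← mul_assoc, ← mul_pow]
      norm_num
    have hpos : (0:ℝ) ≤ (2:ℝ)⁻¹ ^ m := by positivity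
    have hsplit : (2:ℝ)⁻¹ ^ m * ((1 + 2*δ) ^ k * (1 - 2*δ) ^ (m - k))
        = (1/2 + δ) ^ k * (1/2 - δ) ^ (m - k) := by
      have hmk : m = k + (m - k) := by omega
      calc (2:ℝ)⁻¹ ^ m * ((1 + 2*δ) ^ k * (1 - 2*δ) ^ (m - k))
          = ((2:ℝ)⁻¹ ^ k * (2:ℝ)⁻¹ ^ (m-k)) * ((1 + 2*δ) ^ k * (1 - 2*δ) ^ (m - k)) := by
            rw [← pow_add, ← hmk]
        _ = ((2:ℝ)⁻¹ * (1 + 2*δ)) ^ k * ((2:ℝ)⁻¹ * (1 - 2*δ)) ^ (m-k) := by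
            rw [mul_pow, mul_pow]; ring
        _ = (1/2 + δ) ^ k * (1/2 - δ) ^ (m - k) := by
            rw [show (2:ℝ)⁻¹ * (1 + 2*δ) = 1/2 + δ by ring,
               show (2:ℝ)⁻¹ * (1 - 2*δ) = 1/2 - δ by ring]
    rw [hFdef]
    simp only
    rw [show (2:ℝ) ^ m * (((m.choose k : ℝ))
        * ((2:ℝ)⁻¹ ^ n * |(1 + 2*δ) ^ k * (1 - 2*δ) ^ (m - k) - 1|))
      = (m.choose k : ℝ) * (((2:ℝ) ^ m * (2:ℝ)⁻¹ ^ n)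
        * |(1 + 2*δ) ^ k * (1 - 2*δ) ^ (m - k) - 1|) by ring]
    rw [h2m, ← abs_of_nonneg hpos, ← abs_mul, mul_sub, mul_one, abs_of_nonneg hpos, hsplit]
  calc ∑ x : Fin n → Bool, |Plam n δ f b x - (2:ℝ)⁻¹ ^ n|
      = ∑ x : Fin n → Bool, F (agreeCount f b x) :=
        Finset.sum_congr rfl (fun x _ => hpoint x)
    _ = ∑ z : ({i : Fin n // i < f i} → Bool) × ({i : Fin n // i < f i} → Bool),
          F (agreeCount f b ((matchEquiv f b hinv hfpf).symm z)) :=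
        (Equiv.sum_comp (matchEquiv f b hinv hfpf).symm
          (fun x => F (agreeCount f b x))).symm
    _ = ∑ y : {i : Fin n // i < f i} → Bool, ∑ p : {i : Fin n // i < f i} → Bool,
          F ((Finset.univ.filter (fun i => p i = true)).card) := by
        rw [Fintype.sum_prod_type]
        exact Finset.sum_congr rfl (fun y _ => Finset.sum_congr rfl
          (fun p _ => by rw [agreeCount_symm f b hinv hfpf hb]))
    _ = (2:ℝ) ^ m * ∑ p : {i : Fin n // i < f i} → Bool,
          F ((Finset.univ.filter (fun i => p i = true)).card) := by
        rw [Finset.sum_const, Finset.card_univ, Fintype.card_fun, hTcard]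
        simp [nsmul_eq_mul]
    _ = (2:ℝ) ^ m * ∑ s ∈ (Finset.univ : Finset {i : Fin n // i < f i}).powerset,
          F s.card := by
        congr 1
        refine Finset.sum_nbij' (fun p => Finset.univ.filter (fun i => p i = true))
          (fun s => fun i => decide (i ∈ s)) ?_ ?_ ?_ ?_ ?_
        · intro p _
          exact Finset.mem_powerset.2 (Finset.filter_subset _ _)
        · intro s _
          exact Finset.mem_univ _
        · intro p _
          funext i
          simp
        · intro s _
          ext i
          simp
        · intro p _
          rfl
    _ = (2:ℝ) ^ m * ∑ k ∈ Finset.range (m + 1), ((m.choose k : ℝ)) * F k := by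
        congr 1
        rw [Finset.sum_powerset]
        rw [Finset.card_univ, hTcard]
        refine Finset.sum_congr rfl (fun k hk => ?_)
        rw [Finset.sum_congr rfl (fun s hs => by
          rw [(Finset.mem_powersetCard.1 hs).2])]
        rw [Finset.sum_const, Finset.card_powersetCard, Finset.card_univ, hTcard,
          nsmul_eq_mul]
    _ = ∑ k ∈ Finset.range (m + 1), ((m.choose k : ℝ)) *
          |(1/2 + δ) ^ k * (1/2 - δ) ^ (m - k) - (2:ℝ)⁻¹ ^ m| := by
        rw [Finset.mul_sum]
        refine Finset.sum_congr rfl (fun k hk => ?_)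
        exact hkey k (by have := Finset.mem_range.1 hk; omega)
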